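/- arXiv:1703.06331 — 2 statements merged into one kernel-verified Lean document; each statement's English description precedes it below -/
import Mathlib

section
/- Let u(t,ρ,z) = log ρ + t/r_c with r_c = sqrt(3/Λ), Λ > 0, and let g_dS be the 2+1 Lorentzian metric g_dS = -e^{2t/r_c} ρ² dt² + ρ² e^{4t/r_c}(dρ² + dz²) on the region ρ > 0. Then the covariant wave operator satisfies □_{g_dS} u = -Λ e^{-2u}, i.e., u solves the Liouville wave equation □_g u + Λ e^{-2u} = 0. -/
/-!
For a diagonal inverse metric, `□_g u` is `1/√(-g)` times the divergence of the fluxes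
`√(-g) g^{νν} ∂_ν u`. On `ρ > 0` these are `-ρ e^{3t/r_c} / r_c`, `e^{t/r_c}` and `0`. Only the
time flux has nonzero divergence, `-3 ρ e^{3t/r_c} / r_c²`, and dividing by `ρ³ e^{5t/r_c}` gives
`-(3/r_c²) ρ⁻² e^{-2t/r_c} = -Λ e^{-2u}`.
-/

open Real

/-- Partial derivative in the `i`-th coordinate direction on `ℝ³ = Fin 3 → ℝ`. -/
noncomputable def pd (i : Fin 3) (f : (Fin 3 → ℝ) → ℝ) (x : Fin 3 → ℝ) : ℝ :=
  fderiv ℝ f x (Pi.single i 1)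

/-- Covariant wave operator in divergence form:
`□ u = (1/√(-g)) ∂_ν (√(-g) g^{μν} ∂_μ u)`, where `s = √(-det g)` and `ginv` is the
inverse metric. -/
noncomputable def waveOp (s : (Fin 3 → ℝ) → ℝ) (ginv : Fin 3 → Fin 3 → (Fin 3 → ℝ) → ℝ)
    (u : (Fin 3 → ℝ) → ℝ) (x : Fin 3 → ℝ) : ℝ :=
  (1 / s x) * ∑ ν : Fin 3, pd ν (fun y => s y * ∑ μ : Fin 3, ginv μ ν y * pd μ u y) x

open Filter Topology Function

lemma pd_eq_deriv_update {f : (Fin 3 → ℝ) → ℝ} {x : Fin 3 → ℝ} (hf : DifferentiableAt ℝ f x)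
    (i : Fin 3) : pd i f x = deriv (fun r => f (update x i r)) (x i) := by
  have hf' : HasFDerivAt f (fderiv ℝ f x) (update x i (x i)) := by
    rw [update_eq_self]; exact hf.hasFDerivAt
  exact ((hf'.comp_hasDerivAt (x i) (hasDerivAt_update x i (x i))).deriv).symm

-- No differentiability is needed: where `f` is not differentiable, `fderiv` is `0`.
lemma pd_eq_zero_of_update_eq {f : (Fin 3 → ℝ) → ℝ} {i : Fin 3}
    (hf : ∀ y r, f (update y i r) = f y) (x : Fin 3 → ℝ) : pd i f x = 0 := by
  by_cases hd : DifferentiableAt ℝ f x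
  · simp [pd_eq_deriv_update hd, hf]
  · simp [pd, fderiv_zero_of_not_differentiableAt hd]

lemma pd_congr_of_eventuallyEq {f g : (Fin 3 → ℝ) → ℝ} {x : Fin 3 → ℝ} (h : f =ᶠ[𝓝 x] g)
    (i : Fin 3) : pd i f x = pd i g x := by
  rw [pd, pd, h.fderiv_eq]

lemma pd_mul_exp {i j : Fin 3} (hij : j ≠ i) (a k : ℝ) (x : Fin 3 → ℝ) :
    pd i (fun y => a * y j * exp (k * y i)) x = a * k * x j * exp (k * x i) := by
  rw [pd_eq_deriv_update (by fun_prop)]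
  simp [update_of_ne hij, deriv_exp (by fun_prop : DifferentiableAt ℝ (fun r => k * r) (x i))]
  ring

lemma waveOp_of_offDiag {s u : (Fin 3 → ℝ) → ℝ} {ginv : Fin 3 → Fin 3 → (Fin 3 → ℝ) → ℝ}
    (hoff : ∀ (i j : Fin 3) x, i ≠ j → ginv i j x = 0) (x : Fin 3 → ℝ) :
    waveOp s ginv u x =
      (1 / s x) * ∑ ν : Fin 3, pd ν (fun y => s y * (ginv ν ν y * pd ν u y)) x := by
  rw [waveOp]
  congr 1
  refine Finset.sum_congr rfl fun ν _ => ?_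
  congr 1
  funext y
  rw [Finset.sum_eq_single ν (fun μ _ h => by rw [hoff μ ν y h, zero_mul]) (by simp)]

section LogAddDiv

variable (rc : ℝ) {y : Fin 3 → ℝ}

lemma pd_zero_log_add_div (hy : y 1 ≠ 0) : pd 0 (fun y => log (y 1) + y 0 / rc) y = rc⁻¹ := by
  rw [pd_eq_deriv_update (by fun_prop (disch := exact hy))]
  simp

lemma pd_one_log_add_div (hy : y 1 ≠ 0) :
    pd 1 (fun y => log (y 1) + y 0 / rc) y = (y 1)⁻¹ := by
  rw [pd_eq_deriv_update (by fun_prop (disch := exact hy))]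
  simp

lemma pd_two_log_add_div : pd 2 (fun y => log (y 1) + y 0 / rc) y = 0 :=
  pd_eq_zero_of_update_eq (by simp [update_of_ne]) y

end LogAddDiv

lemma exp_neg_nat_mul_log_add {a : ℝ} (ha : 0 < a) (n : ℕ) (b : ℝ) :
    exp (-n * (log a + b)) = exp (-n * b) / a ^ n := by
  rw [mul_add, exp_add, neg_mul, exp_neg, ← log_pow, exp_log (pow_pos ha n), neg_mul]
  ring

theorem liouville_wave_deSitter_general (Λ : ℝ) (hΛ : 0 < Λ) (rc : ℝ) (hrc : rc = Real.sqrt (3 / Λ))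
    (u s : (Fin 3 → ℝ) → ℝ) (ginv : Fin 3 → Fin 3 → (Fin 3 → ℝ) → ℝ)
    (hu : ∀ x, u x = Real.log (x 1) + x 0 / rc)
    (hs : ∀ x, s x = (x 1) ^ 3 * Real.exp (5 * x 0 / rc))
    (h00 : ∀ x, ginv 0 0 x = -(1 / (x 1) ^ 2) * Real.exp (-(2 * x 0) / rc))
    (h11 : ∀ x, ginv 1 1 x = (1 / (x 1) ^ 2) * Real.exp (-(4 * x 0) / rc))
    (hoff : ∀ (i j : Fin 3) x, i ≠ j → ginv i j x = 0) :
    ∀ x : Fin 3 → ℝ, 0 < x 1 →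
      waveOp s ginv u x = -Λ * Real.exp (-2 * u x) := by
  intro x hx
  have hu' : u = fun y => log (y 1) + y 0 / rc := funext hu
  have hΛ_eq : Λ = 3 / rc ^ 2 := by rw [hrc, sq_sqrt (by positivity)]; field_simp
  have hρ : ∀ᶠ y in 𝓝 x, 0 < y 1 := (isOpen_lt continuous_const (continuous_apply 1)).mem_nhds hx
  have flux_t : (fun y => s y * (ginv 0 0 y * pd 0 u y)) =ᶠ[𝓝 x]
      fun y => -rc⁻¹ * y 1 * exp (3 / rc * y 0) := by
    filter_upwards [hρ] with y hy
    rw [hs, h00, hu', pd_zero_log_add_div rc hy.ne',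
      show 3 / rc * y 0 = 5 * y 0 / rc + -(2 * y 0) / rc by ring, exp_add]
    field_simp
  have flux_ρ : (fun y => s y * (ginv 1 1 y * pd 1 u y)) =ᶠ[𝓝 x] fun y => exp (y 0 / rc) := by
    filter_upwards [hρ] with y hy
    rw [hs, h11, hu', pd_one_log_add_div rc hy.ne',
      show y 0 / rc = 5 * y 0 / rc + -(4 * y 0) / rc by ring, exp_add]
    field_simp
  have flux_z : pd 2 (fun y => s y * (ginv 2 2 y * pd 2 u y)) x = 0 := by
    simp only [hu', pd_two_log_add_div, mul_zero]
    exact pd_eq_zero_of_update_eq (fun _ _ => rfl) x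
  have hexp_u : exp (-2 * u x) = exp (-2 * (x 0 / rc)) / x 1 ^ 2 := by
    simpa [hu] using exp_neg_nat_mul_log_add hx 2 (x 0 / rc)
  rw [waveOp_of_offDiag hoff, Fin.sum_univ_three, pd_congr_of_eventuallyEq flux_t,
    pd_congr_of_eventuallyEq flux_ρ, flux_z, pd_mul_exp (by decide),
    pd_eq_zero_of_update_eq (by simp [update_of_ne]), hs, hΛ_eq, hexp_u,
    show 3 / rc * x 0 = 5 * x 0 / rc + -2 * (x 0 / rc) by ring, exp_add]
  field_simp
  ring

/-- coordinates `x = (t, ρ, z)`, `u = log ρ + t/r_c`, `r_c = √(3/Λ)`,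
de Sitter 2+1 metric `g = -e^{2t/r_c} ρ² dt² + ρ² e^{4t/r_c}(dρ² + dz²)`,
with `√(-g) = ρ³ e^{5t/r_c}`, inverse metric `g^{tt} = -ρ⁻² e^{-2t/r_c}`,
`g^{ρρ} = g^{zz} = ρ⁻² e^{-4t/r_c}`. Then `□_g u = -Λ e^{-2u}` on `ρ > 0`. -/
theorem liouville_wave_deSitter (Λ : ℝ) (hΛ : 0 < Λ) (rc : ℝ) (hrc : rc = Real.sqrt (3 / Λ))
    (u s : (Fin 3 → ℝ) → ℝ) (ginv : Fin 3 → Fin 3 → (Fin 3 → ℝ) → ℝ)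
    (hu : ∀ x, u x = Real.log (x 1) + x 0 / rc)
    (hs : ∀ x, s x = (x 1) ^ 3 * Real.exp (5 * x 0 / rc))
    (h00 : ∀ x, ginv 0 0 x = -(1 / (x 1) ^ 2) * Real.exp (-(2 * x 0) / rc))
    (h11 : ∀ x, ginv 1 1 x = (1 / (x 1) ^ 2) * Real.exp (-(4 * x 0) / rc))
    (h22 : ∀ x, ginv 2 2 x = (1 / (x 1) ^ 2) * Real.exp (-(4 * x 0) / rc))
    (hoff : ∀ (i j : Fin 3) x, i ≠ j → ginv i j x = 0) :
    ∀ x : Fin 3 → ℝ, 0 < x 1 →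
      waveOp s ginv u x = -Λ * Real.exp (-2 * u x) :=
  liouville_wave_deSitter_general Λ hΛ rc hrc u s ginv hu hs h00 h11 hoff
end

section
/- Let (M̄, ḡ) be a 3+1 Lorentzian manifold with ḡ = g + e^{2u} dφ², where g is a Lorentzian metric on a 3-manifold M and u is a function on M (both independent of φ). Suppose ḡ satisfies the Einstein equations R̄_{μν} = Λ ḡ_{μν}. Then the conformally rescaled metric g̃ = e^{2u} g satisfies R̃_{μν} = 2 ∇̃_μ u ∇̃_ν u + 2Λ e^{-2u} g̃_{μν}, and u satisfies □_{g̃} u + Λ e^{-2u} = 0. -/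
open Real

/-- Christoffel symbols `Γ^k_{ij}` of a metric `g` with inverse `ginv` in coordinates. -/
noncomputable def christoffel (g ginv : Fin 3 → Fin 3 → (Fin 3 → ℝ) → ℝ)
    (k i j : Fin 3) (x : Fin 3 → ℝ) : ℝ :=
  (1 / 2) * ∑ l : Fin 3, ginv k l x * (pd i (g l j) x + pd j (g l i) x - pd l (g i j) x)

/-- Ricci tensor `R_{ij} = ∂_k Γ^k_{ij} - ∂_j Γ^k_{ki} + Γ^k_{kl} Γ^l_{ij} - Γ^k_{jl} Γ^l_{ki}`. -/
noncomputable def ricci (g ginv : Fin 3 → Fin 3 → (Fin 3 → ℝ) → ℝ)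
    (i j : Fin 3) (x : Fin 3 → ℝ) : ℝ :=
  (∑ k : Fin 3, pd k (christoffel g ginv k i j) x)
    - (∑ k : Fin 3, pd j (christoffel g ginv k k i) x)
    + (∑ k : Fin 3, ∑ l : Fin 3, christoffel g ginv k k l x * christoffel g ginv l i j x)
    - (∑ k : Fin 3, ∑ l : Fin 3, christoffel g ginv k j l x * christoffel g ginv l k i x)

/-- Covariant Hessian `∇_i ∇_j ψ = ∂_i ∂_j ψ - Γ^k_{ij} ∂_k ψ`. -/
noncomputable def hess (g ginv : Fin 3 → Fin 3 → (Fin 3 → ℝ) → ℝ)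
    (ψ : (Fin 3 → ℝ) → ℝ) (i j : Fin 3) (x : Fin 3 → ℝ) : ℝ :=
  pd i (pd j ψ) x - ∑ k : Fin 3, christoffel g ginv k i j x * pd k ψ x

/-- Covariant wave operator `□_g u = g^{μν} ∇_μ∇_ν u`. -/
noncomputable def boxC (g ginv : Fin 3 → Fin 3 → (Fin 3 → ℝ) → ℝ)
    (u : (Fin 3 → ℝ) → ℝ) (x : Fin 3 → ℝ) : ℝ :=
  ∑ i : Fin 3, ∑ j : Fin 3, ginv i j x * hess g ginv u i j x

section calc1
variable {i : Fin 3} {f h : (Fin 3 → ℝ) → ℝ} {x : Fin 3 → ℝ}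
lemma pd_congr (hfh : ∀ y, f y = h y) : pd i f x = pd i h x := by
  have : f = h := funext hfh
  rw [pd, pd, this]
lemma pd_add (hf : DifferentiableAt ℝ f x) (hh : DifferentiableAt ℝ h x) :
    pd i (fun y => f y + h y) x = pd i f x + pd i h x := by
  simp [pd, fderiv_fun_add hf hh]
lemma pd_sub (hf : DifferentiableAt ℝ f x) (hh : DifferentiableAt ℝ h x) :
    pd i (fun y => f y - h y) x = pd i f x - pd i h x := by
  simp [pd, fderiv_fun_sub hf hh]
lemma pd_mul (hf : DifferentiableAt ℝ f x) (hh : DifferentiableAt ℝ h x) :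
    pd i (fun y => f y * h y) x = pd i f x * h x + f x * pd i h x := by
  simp [pd, fderiv_fun_mul hf hh]; ring
lemma pd_const (c : ℝ) : pd i (fun _ => c) x = 0 := by simp [pd]
lemma pd_const_mul (c : ℝ) (hf : DifferentiableAt ℝ f x) :
    pd i (fun y => c * f y) x = c * pd i f x := by
  simp [pd, fderiv_const_mul hf]
lemma pd_sum {n : ℕ} (F : Fin n → (Fin 3 → ℝ) → ℝ)
    (hF : ∀ m, DifferentiableAt ℝ (F m) x) :
    pd i (fun y => ∑ m : Fin n, F m y) x = ∑ m : Fin n, pd i (F m) x := by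
  simp [pd, fderiv_fun_sum (fun m _ => hF m)]
lemma pd_exp (c : ℝ) (hf : DifferentiableAt ℝ f x) :
    pd i (fun y => Real.exp (c * f y)) x = Real.exp (c * f x) * (c * pd i f x) := by
  rw [pd, fderiv_exp (by fun_prop)]
  simp [fderiv_const_mul hf, pd]
lemma contDiff_pd (hf : ContDiff ℝ (⊤ : ℕ∞) f) : ContDiff ℝ (⊤ : ℕ∞) (pd i f) :=
  (hf.fderiv_right (by simp)).clm_apply contDiff_const
lemma ContDiff.dAt (hf : ContDiff ℝ (⊤ : ℕ∞) f) : DifferentiableAt ℝ f x :=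
  (hf.differentiable (by simp)).differentiableAt
lemma pd_comm (hf : ContDiff ℝ (⊤ : ℕ∞) f) (i j : Fin 3) :
    pd i (pd j f) x = pd j (pd i f) x := by
  have hd : ∀ y, HasFDerivAt f (fderiv ℝ f y) y :=
    fun y => (hf.differentiable (by simp) y).hasFDerivAt
  have hd2 : HasFDerivAt (fderiv ℝ f) (fderiv ℝ (fderiv ℝ f) x) x :=
    ((hf.fderiv_right (m := (⊤ : ℕ∞)) (by simp)).differentiable (by simp) x).hasFDerivAt
  have hsym := second_derivative_symmetric hd hd2 (Pi.single i 1) (Pi.single j 1)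
  have e1 : ∀ (a b : Fin 3), pd a (pd b f) x
      = (fderiv ℝ (fderiv ℝ f) x (Pi.single a 1)) (Pi.single b 1) := by
    intro a b
    have : (pd b f) = fun y => (fderiv ℝ f y) (Pi.single b 1) := rfl
    rw [pd, this, fderiv_clm_apply ((hf.fderiv_right (m := (⊤ : ℕ∞)) (by simp)).differentiable (by simp) x)
      (differentiableAt_const _)]
    simp
  rw [e1, e1]
  exact hsym
end calc1

/-- bundled hypotheses -/
structure Setup (g ginv : Fin 3 → Fin 3 → (Fin 3 → ℝ) → ℝ) (u : (Fin 3 → ℝ) → ℝ) : Prop where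
  hg : ∀ i j, ContDiff ℝ (⊤ : ℕ∞) (g i j)
  hginv : ∀ i j, ContDiff ℝ (⊤ : ℕ∞) (ginv i j)
  hu : ContDiff ℝ (⊤ : ℕ∞) u
  hsymm : ∀ i j x, g i j x = g j i x
  hsymminv : ∀ i j x, ginv i j x = ginv j i x
  hinv : ∀ i j x, (∑ k : Fin 3, ginv i k x * g k j x) = if i = j then 1 else 0

/-- gradient vector field `V^k = g^{kl} ∂_l u` -/
noncomputable def Wf (ginv : Fin 3 → Fin 3 → (Fin 3 → ℝ) → ℝ) (u : (Fin 3 → ℝ) → ℝ)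
    (k : Fin 3) : (Fin 3 → ℝ) → ℝ := fun y => ∑ l : Fin 3, ginv k l y * pd l u y

/-- Christoffel correction tensor for conformal change -/
noncomputable def Cf (g ginv : Fin 3 → Fin 3 → (Fin 3 → ℝ) → ℝ) (u : (Fin 3 → ℝ) → ℝ)
    (k i j : Fin 3) : (Fin 3 → ℝ) → ℝ := fun y =>
  (if k = i then (1:ℝ) else 0) * pd j u y + (if k = j then (1:ℝ) else 0) * pd i u y
    - g i j y * Wf ginv u k y

/-- squared gradient -/
noncomputable def Sq (ginv : Fin 3 → Fin 3 → (Fin 3 → ℝ) → ℝ) (u : (Fin 3 → ℝ) → ℝ)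
    (x : Fin 3 → ℝ) : ℝ := ∑ k : Fin 3, ∑ l : Fin 3, ginv k l x * pd k u x * pd l u x

section lemmas
variable {g ginv : Fin 3 → Fin 3 → (Fin 3 → ℝ) → ℝ} {u : (Fin 3 → ℝ) → ℝ}
variable {x : Fin 3 → ℝ}

lemma contDiff_christoffel (S : Setup g ginv u) (k i j : Fin 3) : ContDiff ℝ (⊤ : ℕ∞) (christoffel g ginv k i j) := by
  unfold christoffel
  exact contDiff_const.mul (ContDiff.sum fun l _ => (S.hginv k l).mul
    (((contDiff_pd (S.hg l j)).add (contDiff_pd (S.hg l i))).sub (contDiff_pd (S.hg i j))))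

lemma contDiff_Wf (S : Setup g ginv u) (k : Fin 3) : ContDiff ℝ (⊤ : ℕ∞) (Wf ginv u k) := by
  unfold Wf
  exact ContDiff.sum fun l _ => (S.hginv k l).mul (contDiff_pd S.hu)

lemma contDiff_Cf (S : Setup g ginv u) (k i j : Fin 3) : ContDiff ℝ (⊤ : ℕ∞) (Cf g ginv u k i j) := by
  unfold Cf
  exact ((contDiff_const.mul (contDiff_pd S.hu)).add
    (contDiff_const.mul (contDiff_pd S.hu))).sub ((S.hg i j).mul (contDiff_Wf S k))

/-- transposed inverse relation -/
lemma gginv (S : Setup g ginv u) (i m : Fin 3) (x : Fin 3 → ℝ) :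
    ∑ l : Fin 3, g i l x * ginv l m x = if i = m then 1 else 0 := by
  have : ∑ l : Fin 3, g i l x * ginv l m x = ∑ l : Fin 3, ginv m l x * g l i x := by
    refine Finset.sum_congr rfl fun l _ => ?_
    rw [S.hsymm i l, S.hsymminv l m]; ring
  rw [this, S.hinv m i]
  by_cases h : i = m <;> simp [h]
  · intro h'; exact h h'.symm

/-- contraction of the metric against the gradient field -/
lemma gW (S : Setup g ginv u) (i : Fin 3) (x : Fin 3 → ℝ) :
    ∑ k : Fin 3, g k i x * Wf ginv u k x = pd i u x := by
  unfold Wf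
  have : ∀ k : Fin 3, g k i x * ∑ l : Fin 3, ginv k l x * pd l u x
      = ∑ l : Fin 3, ginv l k x * g k i x * pd l u x := by
    intro k
    rw [Finset.mul_sum]
    exact Finset.sum_congr rfl fun l _ => by rw [S.hsymminv k l]; ring
  rw [Finset.sum_congr rfl fun k _ => this k, Finset.sum_comm]
  have : ∀ l : Fin 3, ∑ k : Fin 3, ginv l k x * g k i x * pd l u x
      = (if l = i then 1 else 0) * pd l u x := by
    intro l
    rw [← Finset.sum_mul, S.hinv l i]
  rw [Finset.sum_congr rfl fun l _ => this l]
  simp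

lemma trace3 (S : Setup g ginv u) (x : Fin 3 → ℝ) : ∑ k : Fin 3, ∑ l : Fin 3, ginv k l x * g k l x = 3 := by
  have : ∀ k : Fin 3, ∑ l : Fin 3, ginv k l x * g k l x = 1 := by
    intro k
    have : ∀ l : Fin 3, ginv k l x * g k l x = ginv k l x * g l k x :=
      fun l => by rw [S.hsymm k l]
    rw [Finset.sum_congr rfl fun l _ => this l, S.hinv k k]; simp
  rw [Finset.sum_congr rfl fun k _ => this k]
  simp

end lemmas

section lemmas2
variable {g ginv : Fin 3 → Fin 3 → (Fin 3 → ℝ) → ℝ} {u : (Fin 3 → ℝ) → ℝ}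

lemma pdg_symm (S : Setup g ginv u) (a b c : Fin 3) (x : Fin 3 → ℝ) :
    pd a (g b c) x = pd a (g c b) x := pd_congr (fun y => S.hsymm b c y)

lemma christoffel_symm (S : Setup g ginv u) (k i j : Fin 3) (x : Fin 3 → ℝ) :
    christoffel g ginv k i j x = christoffel g ginv k j i x := by
  unfold christoffel
  congr 1
  refine Finset.sum_congr rfl fun l _ => ?_
  rw [pdg_symm S l i j]
  ring

lemma pd_emul (S : Setup g ginv u) (a b c : Fin 3) (x : Fin 3 → ℝ) :
    pd a (fun y => Real.exp (2 * u y) * g b c y) x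
      = Real.exp (2 * u x) * (2 * pd a u x * g b c x + pd a (g b c) x) := by
  have h1 : ContDiff ℝ (⊤ : ℕ∞) (fun y => Real.exp (2 * u y)) :=
    Real.contDiff_exp.comp (contDiff_const.mul S.hu)
  rw [pd_mul h1.dAt ((S.hg b c).dAt), pd_exp 2 S.hu.dAt]
  ring

lemma christoffel_conf (S : Setup g ginv u) (k i j : Fin 3) (x : Fin 3 → ℝ) :
    christoffel (fun a b y => Real.exp (2 * u y) * g a b y)
        (fun a b y => Real.exp (-2 * u y) * ginv a b y) k i j x
      = christoffel g ginv k i j x + Cf g ginv u k i j x := by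
  have hE : Real.exp (-2 * u x) * Real.exp (2 * u x) = 1 := by
    rw [← Real.exp_add]; ring_nf; exact Real.exp_zero
  have hkj : ginv k 0 x * g 0 j x + ginv k 1 x * g 1 j x + ginv k 2 x * g 2 j x
      = if k = j then 1 else 0 := by simpa [Fin.sum_univ_three] using S.hinv k j x
  have hki : ginv k 0 x * g 0 i x + ginv k 1 x * g 1 i x + ginv k 2 x * g 2 i x
      = if k = i then 1 else 0 := by simpa [Fin.sum_univ_three] using S.hinv k i x
  simp only [christoffel, Cf, Wf, Fin.sum_univ_three, pd_emul S]
  linear_combination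
    ((1:ℝ)/2) * (ginv k 0 x * ((2 * pd i u x * g 0 j x + pd i (g 0 j) x)
          + (2 * pd j u x * g 0 i x + pd j (g 0 i) x)
          - (2 * pd 0 u x * g i j x + pd 0 (g i j) x))
      + ginv k 1 x * ((2 * pd i u x * g 1 j x + pd i (g 1 j) x)
          + (2 * pd j u x * g 1 i x + pd j (g 1 i) x)
          - (2 * pd 1 u x * g i j x + pd 1 (g i j) x))
      + ginv k 2 x * ((2 * pd i u x * g 2 j x + pd i (g 2 j) x)
          + (2 * pd j u x * g 2 i x + pd j (g 2 i) x)
          - (2 * pd 2 u x * g i j x + pd 2 (g i j) x))) * hE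
    + pd i u x * hkj + pd j u x * hki
end lemmas2

section lemmas3
variable {g ginv : Fin 3 → Fin 3 → (Fin 3 → ℝ) → ℝ} {u : (Fin 3 → ℝ) → ℝ}

lemma pd_hinv (S : Setup g ginv u) (i j m : Fin 3) (x : Fin 3 → ℝ) :
    ∑ k : Fin 3, (pd m (ginv i k) x * g k j x + ginv i k x * pd m (g k j) x) = 0 := by
  have h1 : pd m (fun y => ∑ k : Fin 3, ginv i k y * g k j y) x
      = ∑ k : Fin 3, (pd m (ginv i k) x * g k j x + ginv i k x * pd m (g k j) x) := by
    rw [pd_sum _ (fun k => ((S.hginv i k).mul (S.hg k j)).dAt)]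
    exact Finset.sum_congr rfl fun k _ => pd_mul (S.hginv i k).dAt (S.hg k j).dAt
  rw [← h1, pd_congr (fun y => S.hinv i j y), pd_const]

lemma pd_ginv (S : Setup g ginv u) (m i n : Fin 3) (x : Fin 3 → ℝ) :
    pd m (ginv i n) x = -∑ k : Fin 3, ∑ l : Fin 3, ginv i k x * pd m (g k l) x * ginv l n x := by
  have key : ∀ j : Fin 3, ∑ k : Fin 3, pd m (ginv i k) x * g k j x
      = -∑ k : Fin 3, ginv i k x * pd m (g k j) x := by
    intro j
    have h := pd_hinv S i j m x
    rw [Finset.sum_add_distrib] at h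
    linarith
  calc pd m (ginv i n) x
      = ∑ k : Fin 3, pd m (ginv i k) x * (if k = n then 1 else 0) := by simp
    _ = ∑ k : Fin 3, ∑ l : Fin 3, pd m (ginv i k) x * g k l x * ginv l n x := by
        refine Finset.sum_congr rfl fun k _ => ?_
        rw [← gginv S k n x, Finset.mul_sum]
        exact Finset.sum_congr rfl fun l _ => by ring
    _ = ∑ l : Fin 3, ∑ k : Fin 3, pd m (ginv i k) x * g k l x * ginv l n x :=
        Finset.sum_comm
    _ = ∑ l : Fin 3, (∑ k : Fin 3, pd m (ginv i k) x * g k l x) * ginv l n x := by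
        exact Finset.sum_congr rfl fun l _ => by rw [Finset.sum_mul]
    _ = ∑ l : Fin 3, -((∑ k : Fin 3, ginv i k x * pd m (g k l) x) * ginv l n x) := by
        refine Finset.sum_congr rfl fun l _ => ?_
        rw [key l]; ring
    _ = -∑ k : Fin 3, ∑ l : Fin 3, ginv i k x * pd m (g k l) x * ginv l n x := by
        have h2 : ∀ l : Fin 3, -((∑ k : Fin 3, ginv i k x * pd m (g k l) x) * ginv l n x)
            = ∑ k : Fin 3, -(ginv i k x * pd m (g k l) x * ginv l n x) := by
          intro l
          rw [Finset.sum_mul, ← Finset.sum_neg_distrib]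
        rw [Finset.sum_congr rfl fun l _ => h2 l, Finset.sum_comm, ← Finset.sum_neg_distrib]
        exact Finset.sum_congr rfl fun k _ => Finset.sum_neg_distrib _

lemma compat_half (S : Setup g ginv u) (m i j : Fin 3) (x : Fin 3 → ℝ) :
    ∑ l : Fin 3, g i l x * christoffel g ginv l m j x
      = (1/2) * (pd m (g i j) x + pd j (g i m) x - pd i (g m j) x) := by
  unfold christoffel
  calc ∑ l : Fin 3, g i l x * ((1/2) * ∑ p : Fin 3, ginv l p x *
          (pd m (g p j) x + pd j (g p m) x - pd p (g m j) x))
      = ∑ l : Fin 3, ∑ p : Fin 3, (1/2) * (g i l x * ginv l p x) *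
          (pd m (g p j) x + pd j (g p m) x - pd p (g m j) x) := by
        refine Finset.sum_congr rfl fun l _ => ?_
        rw [Finset.mul_sum, Finset.mul_sum]
        exact Finset.sum_congr rfl fun p _ => by ring
    _ = ∑ p : Fin 3, ∑ l : Fin 3, (1/2) * (g i l x * ginv l p x) *
          (pd m (g p j) x + pd j (g p m) x - pd p (g m j) x) := Finset.sum_comm
    _ = ∑ p : Fin 3, (1/2) * (if i = p then 1 else 0) *
          (pd m (g p j) x + pd j (g p m) x - pd p (g m j) x) := by
        refine Finset.sum_congr rfl fun p _ => ?_
        rw [← gginv S i p x, Finset.mul_sum, Finset.sum_mul]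
    _ = (1/2) * (pd m (g i j) x + pd j (g i m) x - pd i (g m j) x) := by
        simp [Finset.sum_ite_eq, mul_ite, ite_mul]

lemma compat (S : Setup g ginv u) (m i j : Fin 3) (x : Fin 3 → ℝ) :
    pd m (g i j) x = ∑ l : Fin 3, (g i l x * christoffel g ginv l m j x
      + g j l x * christoffel g ginv l m i x) := by
  rw [Finset.sum_add_distrib, compat_half S m i j x, compat_half S m j i x,
    pdg_symm S m j i, pdg_symm S i m j, pdg_symm S j m i]
  ring

end lemmas3

section lemmas4
variable {g ginv : Fin 3 → Fin 3 → (Fin 3 → ℝ) → ℝ} {u : (Fin 3 → ℝ) → ℝ}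

lemma pd_W (S : Setup g ginv u) (a b : Fin 3) (x : Fin 3 → ℝ) :
    pd a (Wf ginv u b) x
      = ∑ l : Fin 3, (pd a (ginv b l) x * pd l u x + ginv b l x * pd a (pd l u) x) := by
  unfold Wf
  rw [pd_sum _ (fun l => ((S.hginv b l).mul (contDiff_pd S.hu)).dAt)]
  exact Finset.sum_congr rfl fun l _ => pd_mul (S.hginv b l).dAt (contDiff_pd S.hu).dAt

lemma divergence (S : Setup g ginv u) (x : Fin 3 → ℝ) :
    (∑ k : Fin 3, pd k (Wf ginv u k) x)
      + ∑ l : Fin 3, (∑ k : Fin 3, christoffel g ginv k k l x) * Wf ginv u l x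
      = boxC g ginv u x := by
  have e10 : ∀ y, ginv 1 0 y = ginv 0 1 y := fun y => S.hsymminv 1 0 y
  have e20 : ∀ y, ginv 2 0 y = ginv 0 2 y := fun y => S.hsymminv 2 0 y
  have e21 : ∀ y, ginv 2 1 y = ginv 1 2 y := fun y => S.hsymminv 2 1 y
  have p10 : ∀ (a : Fin 3) (y : Fin 3 → ℝ), pd a (g 1 0) y = pd a (g 0 1) y :=
    fun a y => pdg_symm S a 1 0 y
  have p20 : ∀ (a : Fin 3) (y : Fin 3 → ℝ), pd a (g 2 0) y = pd a (g 0 2) y :=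
    fun a y => pdg_symm S a 2 0 y
  have p21 : ∀ (a : Fin 3) (y : Fin 3 → ℝ), pd a (g 2 1) y = pd a (g 1 2) y :=
    fun a y => pdg_symm S a 2 1 y
  rw [Finset.sum_congr rfl fun k _ => pd_W S k k x]
  simp only [pd_ginv S, boxC, hess, christoffel, Wf, Fin.sum_univ_three]
  simp only [e10, e20, e21, p10, p20, p21]
  ring

end lemmas4

section lemmas5
variable {g ginv : Fin 3 → Fin 3 → (Fin 3 → ℝ) → ℝ} {u : (Fin 3 → ℝ) → ℝ}

/-- contraction over the first (upper) index of Cf -/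
lemma sum_Cf (S : Setup g ginv u) (a b : Fin 3) (x : Fin 3 → ℝ) (F : Fin 3 → ℝ) :
    ∑ k : Fin 3, F k * Cf g ginv u k a b x
      = F a * pd b u x + F b * pd a u x
        - g a b x * ∑ k : Fin 3, F k * Wf ginv u k x := by
  have h : ∀ k : Fin 3, F k * Cf g ginv u k a b x
      = ((if k = a then F k * pd b u x else 0) + (if k = b then F k * pd a u x else 0))
        - g a b x * (F k * Wf ginv u k x) := by
    intro k
    unfold Cf
    split_ifs <;> ring
  rw [Finset.sum_congr rfl fun k _ => h k, Finset.sum_sub_distrib, Finset.sum_add_distrib]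
  simp [Finset.sum_ite_eq', Finset.mul_sum]

/-- contraction over the third (lower) index of Cf -/
lemma sum_Cf3 (S : Setup g ginv u) (k a : Fin 3) (x : Fin 3 → ℝ) (F : Fin 3 → ℝ) :
    ∑ b : Fin 3, F b * Cf g ginv u k a b x
      = (if k = a then (1:ℝ) else 0) * (∑ b : Fin 3, F b * pd b u x)
        + F k * pd a u x - (∑ b : Fin 3, F b * g a b x) * Wf ginv u k x := by
  have h : ∀ b : Fin 3, F b * Cf g ginv u k a b x
      = ((if k = a then (1:ℝ) else 0) * (F b * pd b u x)
          + (if k = b then F b * pd a u x else 0))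
        - F b * g a b x * Wf ginv u k x := by
    intro b
    unfold Cf
    split_ifs <;> ring
  rw [Finset.sum_congr rfl fun b _ => h b, Finset.sum_sub_distrib, Finset.sum_add_distrib]
  simp [Finset.sum_ite_eq, Finset.mul_sum, Finset.sum_mul]

/-- `∑ g_{jl} W^l = ∂_j u` (second-index version of gW) -/
lemma gW' (S : Setup g ginv u) (j : Fin 3) (x : Fin 3 → ℝ) :
    ∑ l : Fin 3, g j l x * Wf ginv u l x = pd j u x := by
  rw [Finset.sum_congr rfl fun l _ => by rw [S.hsymm j l]]
  exact gW S j x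

/-- trace over first two indices -/
lemma Cdiag1 (S : Setup g ginv u) (l : Fin 3) (y : Fin 3 → ℝ) :
    ∑ k : Fin 3, Cf g ginv u k k l y = 3 * pd l u y := by
  have h : ∀ k : Fin 3, Cf g ginv u k k l y
      = (pd l u y + (if k = l then pd k u y else 0)) - g k l y * Wf ginv u k y := by
    intro k
    unfold Cf
    split_ifs <;> simp_all
  rw [Finset.sum_congr rfl fun k _ => h k, Finset.sum_sub_distrib, Finset.sum_add_distrib,
    gW S l y]
  simp [Finset.sum_ite_eq', Fin.sum_univ_three]

/-- trace over first and third indices -/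
lemma Cdiag2 (S : Setup g ginv u) (j : Fin 3) (y : Fin 3 → ℝ) :
    ∑ k : Fin 3, Cf g ginv u k j k y = 3 * pd j u y := by
  have h : ∀ k : Fin 3, Cf g ginv u k j k y
      = ((if k = j then pd k u y else 0) + pd j u y) - g j k y * Wf ginv u k y := by
    intro k
    unfold Cf
    split_ifs <;> simp_all
  rw [Finset.sum_congr rfl fun k _ => h k, Finset.sum_sub_distrib, Finset.sum_add_distrib,
    gW' S j y]
  simp [Finset.sum_ite_eq', Fin.sum_univ_three]

/-- `∑ a W = Sq` -/
lemma aW_eq_Sq (x : Fin 3 → ℝ) :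
    ∑ l : Fin 3, pd l u x * Wf ginv u l x = Sq ginv u x := by
  simp only [Wf, Sq, Fin.sum_univ_three]
  ring

/-- compat contracted against W -/
lemma compatW (S : Setup g ginv u) (i j : Fin 3) (x : Fin 3 → ℝ) :
    ∑ k : Fin 3, pd k (g i j) x * Wf ginv u k x
      = (∑ k : Fin 3, ∑ l : Fin 3, g i l x * christoffel g ginv l k j x * Wf ginv u k x)
        + ∑ k : Fin 3, ∑ l : Fin 3, g j l x * christoffel g ginv l k i x * Wf ginv u k x := by
  rw [Finset.sum_congr rfl fun k _ => by rw [compat S k i j x]]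
  rw [← Finset.sum_add_distrib]
  refine Finset.sum_congr rfl fun k _ => ?_
  rw [Finset.sum_add_distrib, add_mul, Finset.sum_mul, Finset.sum_mul]

end lemmas5

section lemmas6
variable {g ginv : Fin 3 → Fin 3 → (Fin 3 → ℝ) → ℝ} {u : (Fin 3 → ℝ) → ℝ}

lemma Wa_eq_Sq (x : Fin 3 → ℝ) :
    ∑ l : Fin 3, Wf ginv u l x * pd l u x = Sq ginv u x := by
  simp only [Wf, Sq, Fin.sum_univ_three]
  ring

lemma cross3 (S : Setup g ginv u) (i j : Fin 3) (x : Fin 3 → ℝ) :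
    ∑ k : Fin 3, ∑ l : Fin 3,
        christoffel (fun a b y => Real.exp (2 * u y) * g a b y)
          (fun a b y => Real.exp (-2 * u y) * ginv a b y) k k l x *
        christoffel (fun a b y => Real.exp (2 * u y) * g a b y)
          (fun a b y => Real.exp (-2 * u y) * ginv a b y) l i j x
      = (∑ k : Fin 3, ∑ l : Fin 3,
          christoffel g ginv k k l x * christoffel g ginv l i j x)
        + 3 * (∑ k : Fin 3, christoffel g ginv k i j x * pd k u x)
        + ((∑ k : Fin 3, christoffel g ginv k k i x) * pd j u x
           + (∑ k : Fin 3, christoffel g ginv k k j x) * pd i u x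
           - g i j x * ∑ l : Fin 3,
              (∑ k : Fin 3, christoffel g ginv k k l x) * Wf ginv u l x)
        + (6 * pd i u x * pd j u x - 3 * g i j x * Sq ginv u x) := by
  have step1 : ∑ k : Fin 3, ∑ l : Fin 3,
        christoffel (fun a b y => Real.exp (2 * u y) * g a b y)
          (fun a b y => Real.exp (-2 * u y) * ginv a b y) k k l x *
        christoffel (fun a b y => Real.exp (2 * u y) * g a b y)
          (fun a b y => Real.exp (-2 * u y) * ginv a b y) l i j x
      = (∑ k : Fin 3, ∑ l : Fin 3, christoffel g ginv k k l x * christoffel g ginv l i j x)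
        + ((∑ k : Fin 3, ∑ l : Fin 3, Cf g ginv u k k l x * christoffel g ginv l i j x)
        + ((∑ k : Fin 3, ∑ l : Fin 3, christoffel g ginv k k l x * Cf g ginv u l i j x)
        + (∑ k : Fin 3, ∑ l : Fin 3, Cf g ginv u k k l x * Cf g ginv u l i j x))) := by
    simp only [← Finset.sum_add_distrib]
    refine Finset.sum_congr rfl fun k _ => Finset.sum_congr rfl fun l _ => ?_
    rw [christoffel_conf S k k l x, christoffel_conf S l i j x]
    ring
  have h2 : ∑ k : Fin 3, ∑ l : Fin 3, Cf g ginv u k k l x * christoffel g ginv l i j x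
      = 3 * ∑ k : Fin 3, christoffel g ginv k i j x * pd k u x := by
    rw [Finset.sum_comm]
    have e1 : ∀ l : Fin 3, ∑ k : Fin 3, Cf g ginv u k k l x * christoffel g ginv l i j x
        = 3 * pd l u x * christoffel g ginv l i j x := fun l => by
      rw [← Finset.sum_mul, Cdiag1 S l x]
    rw [Finset.sum_congr rfl fun l _ => e1 l, Finset.mul_sum]
    exact Finset.sum_congr rfl fun l _ => by ring
  have h3 : ∑ k : Fin 3, ∑ l : Fin 3, christoffel g ginv k k l x * Cf g ginv u l i j x
      = (∑ k : Fin 3, christoffel g ginv k k i x) * pd j u x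
        + (∑ k : Fin 3, christoffel g ginv k k j x) * pd i u x
        - g i j x * ∑ l : Fin 3, (∑ k : Fin 3, christoffel g ginv k k l x) * Wf ginv u l x := by
    rw [Finset.sum_comm]
    have e1 : ∀ l : Fin 3, ∑ k : Fin 3, christoffel g ginv k k l x * Cf g ginv u l i j x
        = (∑ k : Fin 3, christoffel g ginv k k l x) * Cf g ginv u l i j x := fun l =>
      (Finset.sum_mul _ _ _).symm
    rw [Finset.sum_congr rfl fun l _ => e1 l]
    exact sum_Cf S i j x _
  have h4 : ∑ k : Fin 3, ∑ l : Fin 3, Cf g ginv u k k l x * Cf g ginv u l i j x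
      = 6 * pd i u x * pd j u x - 3 * g i j x * Sq ginv u x := by
    rw [Finset.sum_comm]
    have e1 : ∀ l : Fin 3, ∑ k : Fin 3, Cf g ginv u k k l x * Cf g ginv u l i j x
        = 3 * (pd l u x * Cf g ginv u l i j x) := fun l => by
      rw [← Finset.sum_mul, Cdiag1 S l x]; ring
    rw [Finset.sum_congr rfl fun l _ => e1 l, ← Finset.mul_sum,
      sum_Cf S i j x (fun l => pd l u x), aW_eq_Sq]
    ring
  rw [step1, h2, h3, h4]
  ring

lemma cross4 (S : Setup g ginv u) (i j : Fin 3) (x : Fin 3 → ℝ) :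
    ∑ k : Fin 3, ∑ l : Fin 3,
        christoffel (fun a b y => Real.exp (2 * u y) * g a b y)
          (fun a b y => Real.exp (-2 * u y) * ginv a b y) k j l x *
        christoffel (fun a b y => Real.exp (2 * u y) * g a b y)
          (fun a b y => Real.exp (-2 * u y) * ginv a b y) l k i x
      = (∑ k : Fin 3, ∑ l : Fin 3,
          christoffel g ginv k j l x * christoffel g ginv l k i x)
        + ((∑ k : Fin 3, christoffel g ginv k i j x * pd k u x)
           + (∑ k : Fin 3, christoffel g ginv k k i x) * pd j u x
           - (∑ k : Fin 3, ∑ l : Fin 3,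
               g j l x * christoffel g ginv l k i x * Wf ginv u k x))
        + ((∑ k : Fin 3, christoffel g ginv k k j x) * pd i u x
           + (∑ k : Fin 3, christoffel g ginv k i j x * pd k u x)
           - (∑ k : Fin 3, ∑ l : Fin 3,
               g i l x * christoffel g ginv l k j x * Wf ginv u k x))
        + (5 * pd i u x * pd j u x - 2 * g i j x * Sq ginv u x) := by
  have step1 : ∑ k : Fin 3, ∑ l : Fin 3,
        christoffel (fun a b y => Real.exp (2 * u y) * g a b y)
          (fun a b y => Real.exp (-2 * u y) * ginv a b y) k j l x *
        christoffel (fun a b y => Real.exp (2 * u y) * g a b y)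
          (fun a b y => Real.exp (-2 * u y) * ginv a b y) l k i x
      = (∑ k : Fin 3, ∑ l : Fin 3, christoffel g ginv k j l x * christoffel g ginv l k i x)
        + ((∑ k : Fin 3, ∑ l : Fin 3, Cf g ginv u k j l x * christoffel g ginv l k i x)
        + ((∑ k : Fin 3, ∑ l : Fin 3, christoffel g ginv k j l x * Cf g ginv u l k i x)
        + (∑ k : Fin 3, ∑ l : Fin 3, Cf g ginv u k j l x * Cf g ginv u l k i x))) := by
    simp only [← Finset.sum_add_distrib]
    refine Finset.sum_congr rfl fun k _ => Finset.sum_congr rfl fun l _ => ?_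
    rw [christoffel_conf S k j l x, christoffel_conf S l k i x]
    ring
  -- ΓC piece
  have hA3 : ∑ k : Fin 3, ∑ l : Fin 3, christoffel g ginv k j l x * Cf g ginv u l k i x
      = (∑ k : Fin 3, christoffel g ginv k k j x) * pd i u x
        + (∑ k : Fin 3, christoffel g ginv k i j x * pd k u x)
        - (∑ k : Fin 3, ∑ l : Fin 3,
            g i l x * christoffel g ginv l k j x * Wf ginv u k x) := by
    have e1 : ∀ k : Fin 3, ∑ l : Fin 3, christoffel g ginv k j l x * Cf g ginv u l k i x
        = christoffel g ginv k j k x * pd i u x + christoffel g ginv k j i x * pd k u x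
          - g k i x * ∑ l : Fin 3, christoffel g ginv k j l x * Wf ginv u l x :=
      fun k => sum_Cf S k i x (fun l => christoffel g ginv k j l x)
    rw [Finset.sum_congr rfl fun k _ => e1 k, Finset.sum_sub_distrib, Finset.sum_add_distrib]
    have p1 : ∑ k : Fin 3, christoffel g ginv k j k x * pd i u x
        = (∑ k : Fin 3, christoffel g ginv k k j x) * pd i u x := by
      rw [Finset.sum_mul]
      exact Finset.sum_congr rfl fun k _ => by rw [christoffel_symm S k j k x]
    have p2 : ∑ k : Fin 3, christoffel g ginv k j i x * pd k u x
        = ∑ k : Fin 3, christoffel g ginv k i j x * pd k u x :=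
      Finset.sum_congr rfl fun k _ => by rw [christoffel_symm S k j i x]
    have p3 : ∑ k : Fin 3, g k i x * ∑ l : Fin 3, christoffel g ginv k j l x * Wf ginv u l x
        = ∑ k : Fin 3, ∑ l : Fin 3, g i l x * christoffel g ginv l k j x * Wf ginv u k x := by
      have e2 : ∀ k : Fin 3, g k i x * ∑ l : Fin 3, christoffel g ginv k j l x * Wf ginv u l x
          = ∑ l : Fin 3, g k i x * (christoffel g ginv k j l x * Wf ginv u l x) :=
        fun k => Finset.mul_sum _ _ _
      rw [Finset.sum_congr rfl fun k _ => e2 k, Finset.sum_comm]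
      refine Finset.sum_congr rfl fun k _ => Finset.sum_congr rfl fun l _ => ?_
      rw [S.hsymm l i, christoffel_symm S l j k x]
      ring
    rw [p1, p2, p3]
  -- CΓ piece
  have hA2 : ∑ k : Fin 3, ∑ l : Fin 3, Cf g ginv u k j l x * christoffel g ginv l k i x
      = (∑ k : Fin 3, christoffel g ginv k i j x * pd k u x)
        + (∑ k : Fin 3, christoffel g ginv k k i x) * pd j u x
        - (∑ k : Fin 3, ∑ l : Fin 3,
            g j l x * christoffel g ginv l k i x * Wf ginv u k x) := by
    have e1 : ∀ k : Fin 3, ∑ l : Fin 3, Cf g ginv u k j l x * christoffel g ginv l k i x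
        = (if k = j then (1:ℝ) else 0) * (∑ l : Fin 3, christoffel g ginv l k i x * pd l u x)
          + christoffel g ginv k k i x * pd j u x
          - (∑ l : Fin 3, christoffel g ginv l k i x * g j l x) * Wf ginv u k x := by
      intro k
      rw [Finset.sum_congr rfl fun l _ => mul_comm (Cf g ginv u k j l x) _]
      exact sum_Cf3 S k j x (fun l => christoffel g ginv l k i x)
    rw [Finset.sum_congr rfl fun k _ => e1 k, Finset.sum_sub_distrib, Finset.sum_add_distrib]
    have p1 : ∑ k : Fin 3, (if k = j then (1:ℝ) else 0)
          * (∑ l : Fin 3, christoffel g ginv l k i x * pd l u x)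
        = ∑ k : Fin 3, christoffel g ginv k i j x * pd k u x := by
      simp only [ite_mul, one_mul, zero_mul, Finset.sum_ite_eq', Finset.mem_univ, if_true]
      exact Finset.sum_congr rfl fun l _ => by rw [christoffel_symm S l j i x]
    have p2 : ∑ k : Fin 3, christoffel g ginv k k i x * pd j u x
        = (∑ k : Fin 3, christoffel g ginv k k i x) * pd j u x := (Finset.sum_mul _ _ _).symm
    have p3 : ∑ k : Fin 3, (∑ l : Fin 3, christoffel g ginv l k i x * g j l x) * Wf ginv u k x
        = ∑ k : Fin 3, ∑ l : Fin 3, g j l x * christoffel g ginv l k i x * Wf ginv u k x := by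
      refine Finset.sum_congr rfl fun k _ => ?_
      rw [Finset.sum_mul]
      exact Finset.sum_congr rfl fun l _ => by ring
    rw [p1, p2, p3]
  -- CC piece
  have hA4 : ∑ k : Fin 3, ∑ l : Fin 3, Cf g ginv u k j l x * Cf g ginv u l k i x
      = 5 * pd i u x * pd j u x - 2 * g i j x * Sq ginv u x := by
    have inner : ∀ k : Fin 3, ∑ l : Fin 3, Cf g ginv u k j l x * Wf ginv u l x
        = (if k = j then (1:ℝ) else 0) * Sq ginv u x := by
      intro k
      rw [Finset.sum_congr rfl fun l _ => mul_comm (Cf g ginv u k j l x) _,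
        sum_Cf3 S k j x (fun l => Wf ginv u l x), Wa_eq_Sq]
      have e : ∑ l : Fin 3, Wf ginv u l x * g j l x = pd j u x := by
        rw [Finset.sum_congr rfl fun l _ => mul_comm (Wf ginv u l x) _]
        exact gW' S j x
      rw [e]
      ring
    have e1 : ∀ k : Fin 3, ∑ l : Fin 3, Cf g ginv u k j l x * Cf g ginv u l k i x
        = Cf g ginv u k j k x * pd i u x + Cf g ginv u k j i x * pd k u x
          - g k i x * ((if k = j then (1:ℝ) else 0) * Sq ginv u x) := by
      intro k
      rw [sum_Cf S k i x (fun l => Cf g ginv u k j l x), inner k]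
    rw [Finset.sum_congr rfl fun k _ => e1 k, Finset.sum_sub_distrib, Finset.sum_add_distrib]
    have q1 : ∑ k : Fin 3, Cf g ginv u k j k x * pd i u x
        = 3 * pd j u x * pd i u x := by
      rw [← Finset.sum_mul, Cdiag2 S j x]
    have q2 : ∑ k : Fin 3, Cf g ginv u k j i x * pd k u x
        = 2 * pd i u x * pd j u x - g i j x * Sq ginv u x := by
      rw [Finset.sum_congr rfl fun k _ => mul_comm (Cf g ginv u k j i x) _,
        sum_Cf S j i x (fun k => pd k u x), aW_eq_Sq, S.hsymm j i]
      ring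
    have q3 : ∑ k : Fin 3, g k i x * ((if k = j then (1:ℝ) else 0) * Sq ginv u x)
        = g i j x * Sq ginv u x := by
      have e : ∀ k : Fin 3, g k i x * ((if k = j then (1:ℝ) else 0) * Sq ginv u x)
          = if k = j then g k i x * Sq ginv u x else 0 := by
        intro k; split_ifs <;> ring
      rw [Finset.sum_congr rfl fun k _ => e k]
      simp [Finset.sum_ite_eq', S.hsymm j i]
    rw [q1, q2, q3]
    ring
  rw [step1, hA2, hA3, hA4]
  ring

end lemmas6

section lemmas7
variable {g ginv : Fin 3 → Fin 3 → (Fin 3 → ℝ) → ℝ} {u : (Fin 3 → ℝ) → ℝ}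

lemma pd_christoffel_conf (S : Setup g ginv u) (m a b c : Fin 3) (x : Fin 3 → ℝ) :
    pd m (christoffel (fun a b y => Real.exp (2 * u y) * g a b y)
        (fun a b y => Real.exp (-2 * u y) * ginv a b y) a b c) x
      = pd m (christoffel g ginv a b c) x + pd m (Cf g ginv u a b c) x :=
  (pd_congr (fun y => christoffel_conf S a b c y)).trans
    (pd_add (contDiff_christoffel S a b c).dAt (contDiff_Cf S a b c).dAt)

lemma pd_Cf (S : Setup g ginv u) (m a i j : Fin 3) (x : Fin 3 → ℝ) :
    pd m (Cf g ginv u a i j) x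
      = (if a = i then (1:ℝ) else 0) * pd m (pd j u) x
        + (if a = j then (1:ℝ) else 0) * pd m (pd i u) x
        - (pd m (g i j) x * Wf ginv u a x + g i j x * pd m (Wf ginv u a) x) := by
  unfold Cf
  rw [pd_sub (((contDiff_const.mul (contDiff_pd S.hu)).add
        (contDiff_const.mul (contDiff_pd S.hu))).dAt)
      (((S.hg i j).mul (contDiff_Wf S a)).dAt),
    pd_add ((contDiff_const.mul (contDiff_pd S.hu)).dAt)
      ((contDiff_const.mul (contDiff_pd S.hu)).dAt),
    pd_const_mul _ (contDiff_pd S.hu).dAt, pd_const_mul _ (contDiff_pd S.hu).dAt,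
    pd_mul (S.hg i j).dAt (contDiff_Wf S a).dAt]

lemma T1conf (S : Setup g ginv u) (i j : Fin 3) (x : Fin 3 → ℝ) :
    ∑ k : Fin 3, pd k (christoffel (fun a b y => Real.exp (2 * u y) * g a b y)
        (fun a b y => Real.exp (-2 * u y) * ginv a b y) k i j) x
      = (∑ k : Fin 3, pd k (christoffel g ginv k i j) x)
        + (pd i (pd j u) x + pd j (pd i u) x
          - (∑ k : Fin 3, pd k (g i j) x * Wf ginv u k x)
          - g i j x * ∑ k : Fin 3, pd k (Wf ginv u k) x) := by
  rw [Finset.sum_congr rfl fun k _ => pd_christoffel_conf S k k i j x,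
    Finset.sum_add_distrib, Finset.sum_congr rfl fun k _ => pd_Cf S k k i j x,
    Finset.sum_sub_distrib, Finset.sum_add_distrib, Finset.sum_add_distrib]
  simp only [ite_mul, one_mul, zero_mul, Finset.sum_ite_eq', Finset.mem_univ, if_true,
    ← Finset.mul_sum]
  ring

lemma T2conf (S : Setup g ginv u) (i j : Fin 3) (x : Fin 3 → ℝ) :
    ∑ k : Fin 3, pd j (christoffel (fun a b y => Real.exp (2 * u y) * g a b y)
        (fun a b y => Real.exp (-2 * u y) * ginv a b y) k k i) x
      = (∑ k : Fin 3, pd j (christoffel g ginv k k i) x) + 3 * pd j (pd i u) x := by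
  rw [Finset.sum_congr rfl fun k _ => pd_christoffel_conf S j k k i x,
    Finset.sum_add_distrib]
  congr 1
  rw [← pd_sum (fun k => Cf g ginv u k k i) (fun k => (contDiff_Cf S k k i).dAt),
    pd_congr (fun y => Cdiag1 S i y)]
  exact pd_const_mul 3 (contDiff_pd S.hu).dAt

lemma hessConf (S : Setup g ginv u) (i j : Fin 3) (x : Fin 3 → ℝ) :
    hess (fun a b y => Real.exp (2 * u y) * g a b y)
        (fun a b y => Real.exp (-2 * u y) * ginv a b y) u i j x
      = hess g ginv u i j x - 2 * pd i u x * pd j u x + g i j x * Sq ginv u x := by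
  unfold hess
  rw [Finset.sum_congr rfl fun k _ => by rw [christoffel_conf S k i j x]]
  have e1 : ∀ k : Fin 3, (christoffel g ginv k i j x + Cf g ginv u k i j x) * pd k u x
      = christoffel g ginv k i j x * pd k u x + pd k u x * Cf g ginv u k i j x := by
    intro k; ring
  rw [Finset.sum_congr rfl fun k _ => e1 k, Finset.sum_add_distrib,
    sum_Cf S i j x (fun k => pd k u x), aW_eq_Sq]
  ring

lemma boxConf (S : Setup g ginv u) (x : Fin 3 → ℝ) :
    boxC (fun a b y => Real.exp (2 * u y) * g a b y)
        (fun a b y => Real.exp (-2 * u y) * ginv a b y) u x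
      = Real.exp (-2 * u x) * (boxC g ginv u x + Sq ginv u x) := by
  have htr := trace3 S x
  simp only [Fin.sum_univ_three] at htr
  simp only [boxC, hessConf S, Sq, Fin.sum_univ_three]
  linear_combination (Real.exp (-2 * u x) *
    (ginv 0 0 x * pd 0 u x * pd 0 u x + ginv 0 1 x * pd 0 u x * pd 1 u x
      + ginv 0 2 x * pd 0 u x * pd 2 u x + ginv 1 0 x * pd 1 u x * pd 0 u x
      + ginv 1 1 x * pd 1 u x * pd 1 u x + ginv 1 2 x * pd 1 u x * pd 2 u x
      + ginv 2 0 x * pd 2 u x * pd 0 u x + ginv 2 1 x * pd 2 u x * pd 1 u x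
      + ginv 2 2 x * pd 2 u x * pd 2 u x)) * htr
end lemmas7

section final
variable {g ginv : Fin 3 → Fin 3 → (Fin 3 → ℝ) → ℝ} {u : (Fin 3 → ℝ) → ℝ}

lemma ricciConf (S : Setup g ginv u) (i j : Fin 3) (x : Fin 3 → ℝ) :
    ricci (fun a b y => Real.exp (2 * u y) * g a b y)
        (fun a b y => Real.exp (-2 * u y) * ginv a b y) i j x
      = ricci g ginv i j x - hess g ginv u i j x + pd i u x * pd j u x
        - g i j x * (boxC g ginv u x + Sq ginv u x) := by
  unfold ricci
  rw [T1conf S i j x, T2conf S i j x, cross3 S i j x, cross4 S i j x]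
  have h6 := divergence S x
  have h8 : pd i (pd j u) x = pd j (pd i u) x := pd_comm S.hu i j
  have h9 : hess g ginv u i j x
      = pd i (pd j u) x - ∑ k : Fin 3, christoffel g ginv k i j x * pd k u x := rfl
  have hX := compatW S i j x
  linear_combination -hX + h9 + 2 * h8 - g i j x * h6

end final


/-- dimensional reduction of the 3+1 Einstein equations `R̄_{μν} = Λ ḡ_{μν}`
for the polarized ansatz `ḡ = g + e^{2u} dφ²`. The hypotheses `hE1`, `hE2` are the
Einstein equations written via the Kaluza–Klein projection formulas
`R̄_{μν} = R_{μν} - ∇_μu ∇_νu - ∇_μ∇_νu = Λ g_{μν}` (tangential components) and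
`R̄_{φφ} = -e^{2u}(g^{μν}∇_μ∇_νu + g^{μν}∇_μu∇_νu) = Λ e^{2u}`.
Conclusion: the conformally rescaled metric `g̃ = e^{2u} g` satisfies
`R̃_{μν} = 2 ∇̃_μu ∇̃_νu + 2Λ e^{-2u} g̃_{μν}` and `□_{g̃} u + Λ e^{-2u} = 0`. -/
theorem polarized_reduction (Λ : ℝ) (hΛ : 0 < Λ)
    (g ginv : Fin 3 → Fin 3 → (Fin 3 → ℝ) → ℝ) (u : (Fin 3 → ℝ) → ℝ)
    (hg : ∀ i j, ContDiff ℝ (⊤ : ℕ∞) (g i j)) (hginv : ∀ i j, ContDiff ℝ (⊤ : ℕ∞) (ginv i j))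
    (hu : ContDiff ℝ (⊤ : ℕ∞) u)
    (hsymm : ∀ i j x, g i j x = g j i x) (hsymminv : ∀ i j x, ginv i j x = ginv j i x)
    (hinv : ∀ (i j : Fin 3) (x : Fin 3 → ℝ),
      (∑ k : Fin 3, ginv i k x * g k j x) = if i = j then 1 else 0)
    (hE1 : ∀ (i j : Fin 3) (x : Fin 3 → ℝ),
      ricci g ginv i j x - pd i u x * pd j u x - hess g ginv u i j x = Λ * g i j x)
    (hE2 : ∀ x : Fin 3 → ℝ,
      -Real.exp (2 * u x) *
        ((∑ i : Fin 3, ∑ j : Fin 3, ginv i j x * hess g ginv u i j x)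
          + ∑ i : Fin 3, ∑ j : Fin 3, ginv i j x * pd i u x * pd j u x)
        = Λ * Real.exp (2 * u x)) :
    (∀ (i j : Fin 3) (x : Fin 3 → ℝ),
      ricci (fun i j y => Real.exp (2 * u y) * g i j y)
          (fun i j y => Real.exp (-2 * u y) * ginv i j y) i j x
        = 2 * pd i u x * pd j u x
          + 2 * Λ * Real.exp (-2 * u x) * (Real.exp (2 * u x) * g i j x))
    ∧ (∀ x : Fin 3 → ℝ,
      boxC (fun i j y => Real.exp (2 * u y) * g i j y)
          (fun i j y => Real.exp (-2 * u y) * ginv i j y) u x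
        + Λ * Real.exp (-2 * u x) = 0) := by
  have S : Setup g ginv u := ⟨hg, hginv, hu, hsymm, hsymminv, hinv⟩
  have hEE : ∀ x : Fin 3 → ℝ, Real.exp (-2 * u x) * Real.exp (2 * u x) = 1 := fun x => by
    rw [← Real.exp_add]; ring_nf; exact Real.exp_zero
  have hBS : ∀ x : Fin 3 → ℝ, boxC g ginv u x + Sq ginv u x = -Λ := by
    intro x
    have h3 : -Real.exp (2 * u x) * (boxC g ginv u x + Sq ginv u x)
        = Λ * Real.exp (2 * u x) := hE2 x
    have he : Real.exp (2 * u x) ≠ 0 := Real.exp_ne_zero _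
    have h4 : (boxC g ginv u x + Sq ginv u x) * Real.exp (2 * u x)
        = (-Λ) * Real.exp (2 * u x) := by linear_combination -h3
    exact mul_right_cancel₀ he h4
  constructor
  · intro i j x
    rw [ricciConf S i j x]
    linear_combination hE1 i j x - g i j x * hBS x - (2 * Λ * g i j x) * hEE x
  · intro x
    rw [boxConf S x, hBS x]
    ring
end
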